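/- Let V be a finite-dimensional real vector space and let p, q be quadratic forms on V, each nondegenerate of index 1 (i.e. for each of p and q there exists a basis of V in which the form is diagonal with exactly one negative diagonal entry, the rest positive). Assume that the light cone of q lies inside the light cone of p, i.e. every nonzero v ∈ V with q(v) ≤ 0 satisfies p(v) < 0. Then p and q can be simultaneously diagonalized: there exists a basis (b i) of V such that the associated symmetric bilinear forms of p and of q both vanish on every pair (b i, b j) with i ≠ j. -/

import Mathlib

/-- A quadratic form on a finite-dimensional real vector space is *nondegenerate of index 1*
if in some basis it is diagonal with exactly one negative and `dim V - 1` positive diagonal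
entries. -/
def IsIndexOneForm {V : Type*} [AddCommGroup V] [Module ℝ V] [FiniteDimensional ℝ V]
    (p : QuadraticForm ℝ V) : Prop :=
  ∃ (b : Module.Basis (Fin (Module.finrank ℝ V)) ℝ V) (i₀ : Fin (Module.finrank ℝ V)),
    (∀ i j, i ≠ j → QuadraticMap.polar p (b i) (b j) = 0) ∧
    p (b i₀) < 0 ∧ ∀ i, i ≠ i₀ → 0 < p (b i)

/-!
Maximise `q / p` over the open cone `q < 0`, on which `p < 0`; by scale invariance the maximum is
attained on the compact intersection of the closed cone with a sphere. At a maximiser `x₀` the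
form `p x₀ • q - q x₀ • p` has a local maximum `0` at `x₀`, so its polar form vanishes at `x₀`:
`x₀` has the same orthogonal complement `W` for `p` and for `q`. As `q` has index 1 and
`q x₀ < 0`, `q` is positive definite on `W`, so the spectral theorem for the operator
representing `p` in the inner product `polar q` diagonalises `p` and `q` on `W`; adjoining `x₀`
gives the basis.
-/

open QuadraticMap Module Filter Topology

namespace QuadraticMap

variable {V : Type*} [AddCommGroup V] [Module ℝ V]

theorem continuous_of_finiteDimensional {E : Type*} [NormedAddCommGroup E] [NormedSpace ℝ E]
    [FiniteDimensional ℝ E] (q : QuadraticForm ℝ E) : Continuous q := by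
  have := isModuleTopologyOfFiniteDimensional (𝕜 := ℝ) (E := E)
  have h := (IsModuleTopology.continuous_bilinear_of_finite_left (R := ℝ) (polarBilin q)).comp
    (continuous_id.prodMk continuous_id)
  convert h.div_const 2 using 1
  ext x
  simp [polar_self]

theorem map_smul_div_map_smul (p q : QuadraticForm ℝ V) {c : ℝ} (hc : c ≠ 0) (x : V) :
    q (c • x) / p (c • x) = q x / p x := by
  simp only [QuadraticMap.map_smul, smul_eq_mul]
  exact mul_div_mul_left _ _ (mul_ne_zero hc hc)

theorem exists_isMaxOn_div_of_normed {E : Type*} [NormedAddCommGroup E] [NormedSpace ℝ E]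
    [FiniteDimensional ℝ E] (p q : QuadraticForm ℝ E) (hneg : ∃ v, q v < 0)
    (hcone : ∀ v, v ≠ 0 → q v ≤ 0 → p v < 0) :
    ∃ x₀, q x₀ < 0 ∧ IsMaxOn (fun x => q x / p x) {x | q x < 0} x₀ := by
  set K : Set E := Metric.sphere 0 1 ∩ {x | q x ≤ 0}
  have hK : IsCompact K :=
    (isCompact_sphere 0 1).inter_right (isClosed_le q.continuous_of_finiteDimensional
      continuous_const)
  have hpK : ∀ x ∈ K, p x < 0 := fun x hx =>
    hcone x (ne_zero_of_mem_unit_sphere ⟨x, hx.1⟩) hx.2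
  have hnormalize (x : E) (hx : q x < 0) :
      ‖x‖⁻¹ • x ∈ K ∧ q (‖x‖⁻¹ • x) / p (‖x‖⁻¹ • x) = q x / p x :=
    have hx0 : x ≠ 0 := by rintro rfl; simp at hx
    ⟨⟨by simp [norm_smul, hx0], by
      simpa [QuadraticMap.map_smul] using mul_nonpos_of_nonneg_of_nonpos (by positivity) hx.le⟩,
      map_smul_div_map_smul p q (inv_ne_zero (norm_ne_zero_iff.2 hx0)) x⟩
  obtain ⟨v, hv⟩ := hneg
  obtain ⟨x₀, hx₀K, hmax⟩ := hK.exists_isMaxOn ⟨_, (hnormalize v hv).1⟩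
    (q.continuous_of_finiteDimensional.continuousOn.div
      p.continuous_of_finiteDimensional.continuousOn fun x hx => (hpK x hx).ne)
  have hvx₀ : q v / p v ≤ q x₀ / p x₀ := (hnormalize v hv).2 ▸ hmax (hnormalize v hv).1
  have hqx₀ : q x₀ ≠ 0 := fun h => by
    have := div_pos_of_neg_of_neg hv (hcone v (by rintro rfl; simp at hv) hv.le)
    simp [h] at hvx₀; linarith
  refine ⟨x₀, lt_of_le_of_ne hx₀K.2 hqx₀, fun x (hx : q x < 0) => ?_⟩
  obtain ⟨hxK, hratio⟩ := hnormalize x hx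
  show q x / p x ≤ q x₀ / p x₀
  simpa [hratio] using hmax hxK

theorem exists_isMaxOn_div [FiniteDimensional ℝ V] (p q : QuadraticForm ℝ V)
    (hneg : ∃ v, q v < 0) (hcone : ∀ v, v ≠ 0 → q v ≤ 0 → p v < 0) :
    ∃ x₀, q x₀ < 0 ∧ IsMaxOn (fun x => q x / p x) {x | q x < 0} x₀ := by
  let e := (finBasis ℝ V).equivFun
  obtain ⟨y₀, hy₀, hmax⟩ := exists_isMaxOn_div_of_normed (p.comp e.symm.toLinearMap)
    (q.comp e.symm.toLinearMap) (let ⟨v, hv⟩ := hneg; ⟨e v, by simpa using hv⟩)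
    (fun y hy => hcone _ (by simpa using hy))
  exact ⟨e.symm y₀, hy₀, fun x hx => by simpa using hmax (a := e x) (by simpa using hx)⟩

theorem mul_polar_eq_of_isMaxOn_div (p q : QuadraticForm ℝ V) {x₀ : V}
    (hp : ∀ x, q x < 0 → p x < 0) (hx₀ : q x₀ < 0)
    (hmax : IsMaxOn (fun x => q x / p x) {x | q x < 0} x₀) (y : V) :
    p x₀ * polar q x₀ y = q x₀ * polar p x₀ y := by
  set R := p x₀ • q - q x₀ • p
  have hR : IsMaxOn R {x | q x < 0} x₀ := fun x (hx : q x < 0) => by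
    have : q x / p x ≤ q x₀ / p x₀ := hmax hx
    rw [← neg_div_neg_eq (q x), ← neg_div_neg_eq (q x₀),
      div_le_div_iff₀ (neg_pos.2 (hp x hx)) (neg_pos.2 (hp x₀ hx₀))] at this
    show R x ≤ R x₀
    simp only [R, _root_.sub_apply, _root_.smul_apply, smul_eq_mul]
    linarith
  have hline : ∀ᶠ t : ℝ in 𝓝 0, x₀ + t • y ∈ {x | q x < 0} := by
    have := (q.hasLineDerivAt x₀ y).continuousAt.tendsto
    simp only [zero_smul, add_zero] at this
    exact this.eventually_lt_const hx₀
  have hpolar : polar R x₀ y = p x₀ * polar q x₀ y - q x₀ * polar p x₀ y := by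
    simp only [polar, R, _root_.sub_apply, _root_.smul_apply, smul_eq_mul]
    ring
  linarith [hpolar ▸ hR.hasLineDerivAt_eq_zero (R.hasLineDerivAt x₀ y) hline]

theorem pos_of_basis_repr_eq_zero {ι : Type*} [Fintype ι] (p : QuadraticForm ℝ V)
    (b : Basis ι ℝ V) (hb : ∀ i j, i ≠ j → polar p (b i) (b j) = 0) {i₀ : ι}
    (hpos : ∀ i, i ≠ i₀ → 0 < p (b i)) {x : V} (hx : b.repr x i₀ = 0) (hx0 : x ≠ 0) :
    0 < p x := by
  have hdiag : p x = ∑ i, p (b i) * (b.repr x i * b.repr x i) := by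
    have := congrArg (· (b.repr x)) (p.basisRepr_eq_of_iIsOrtho b fun i j hij =>
      associated_isOrtho.2 (isOrtho_polarBilin.1 (hb i j hij)))
    simpa [b.sum_repr] using this
  obtain ⟨j, hj⟩ : ∃ j, b.repr x j ≠ 0 := by
    by_contra! h
    exact hx0 (b.repr.map_eq_zero_iff.1 (Finsupp.ext h))
  have hji₀ : j ≠ i₀ := by rintro rfl; exact hj hx
  rw [hdiag]
  refine Finset.sum_pos' (fun i _ => ?_) ⟨j, Finset.mem_univ j, ?_⟩
  · obtain rfl | hi := eq_or_ne i i₀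
    · simp [hx]
    · exact mul_nonneg (hpos i hi).le (mul_self_nonneg _)
  · exact mul_pos (hpos j hji₀) (mul_self_pos.2 hj)

theorem PosDef.nondegenerate_polarBilin {q : QuadraticForm ℝ V} (hq : q.PosDef) :
    (polarBilin q).Nondegenerate := by
  refine (LinearMap.IsRefl.nondegenerate_iff_separatingLeft ?_).2
    (LinearMap.BilinForm.separatingLeft_of_anisotropic ?_)
  · exact fun x y h => by rwa [polarBilin_apply_apply, polar_comm, ← polarBilin_apply_apply]
  · exact fun x hx => hq.anisotropic x (by simpa using hx)

noncomputable abbrev PosDef.innerProductCore {q : QuadraticForm ℝ V} (hq : q.PosDef) :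
    InnerProductSpace.Core ℝ V where
  inner x y := polar q x y
  conj_inner_symm x y := polar_comm q y x
  re_inner_nonneg x := by simpa [polar_self] using hq.nonneg x
  add_left x y z := polar_add_left q x y z
  smul_left x y r := polar_smul_left q r x y
  definite x hx := hq.anisotropic x (by simpa [polar_self] using hx)

theorem PosDef.exists_basis_isOrthoᵢ [FiniteDimensional ℝ V] (p : QuadraticForm ℝ V)
    {q : QuadraticForm ℝ V} (hq : q.PosDef) :
    ∃ b : Basis (Fin (finrank ℝ V)) ℝ V,
      (polarBilin p).IsOrthoᵢ b ∧ (polarBilin q).IsOrthoᵢ b := by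
  let : NormedAddCommGroup V := hq.innerProductCore.toNormedAddCommGroup
  let : InnerProductSpace ℝ V := .ofCore hq.innerProductCore.toCore
  let T := LinearMap.BilinForm.symmCompOfNondegenerate (polarBilin p) (polarBilin q)
    hq.nondegenerate_polarBilin
  have hT (x y : V) : polar q (T x) y = polar p x y :=
    LinearMap.BilinForm.symmCompOfNondegenerate_left_apply (polarBilin p)
      hq.nondegenerate_polarBilin y x
  have hTsymm : T.IsSymmetric := fun x y => by
    change polar q (T x) y = polar q x (T y)
    rw [hT, polar_comm q, hT, polar_comm p]
  let b := hTsymm.eigenvectorBasis rfl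
  have hqb : (polarBilin q).IsOrthoᵢ b := fun i j hij => b.orthonormal.2 hij
  refine ⟨b.toBasis, fun i j hij => ?_, by simpa using hqb⟩
  simp only [OrthonormalBasis.coe_toBasis, Function.onFun, polarBilin_apply_apply]
  rw [← hT, hTsymm.apply_eigenvectorBasis, polar_smul_left]
  exact (congrArg _ (hqb hij)).trans (smul_zero _)

theorem isOrthoᵢ_polarBilin_cons (q : QuadraticForm ℝ V) {n : ℕ} {y : V} {v : Fin n → V}
    (hy : ∀ j, polar q y (v j) = 0) (hv : (polarBilin q).IsOrthoᵢ v) :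
    (polarBilin q).IsOrthoᵢ (Fin.cons y v : Fin (n + 1) → V) := by
  intro i j hij
  cases i using Fin.cases with
  | zero =>
    cases j using Fin.cases with
    | zero => exact absurd rfl hij
    | succ j => exact hy j
  | succ i =>
    cases j using Fin.cases with
    | zero => exact (polar_comm q _ _).trans (hy i)
    | succ j => exact hv (ne_of_apply_ne Fin.succ hij)

theorem exists_basis_isOrthoᵢ_of_ker_polarBilin [FiniteDimensional ℝ V] (p q : QuadraticForm ℝ V)
    {x₀ : V} (hx₀ : q x₀ ≠ 0) (hp : ∀ w, polar q x₀ w = 0 → polar p x₀ w = 0) {n : ℕ}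
    (b : Basis (Fin n) ℝ (LinearMap.ker (polarBilin q x₀)))
    (hpb : (polarBilin p).IsOrthoᵢ ((↑) ∘ b)) (hqb : (polarBilin q).IsOrthoᵢ ((↑) ∘ b)) :
    ∃ b : Basis (Fin (finrank ℝ V)) ℝ V,
      (polarBilin p).IsOrthoᵢ b ∧ (polarBilin q).IsOrthoᵢ b := by
  have hqx₀ : polar q x₀ x₀ ≠ 0 := by simp [polar_self, hx₀]
  obtain ⟨B, hBcoe⟩ : ∃ B : Basis (Fin (n + 1)) ℝ V, ⇑B = Fin.cons x₀ ((↑) ∘ b) :=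
    ⟨_, Basis.coe_mkFinCons x₀ b
    (fun c x (hx : polar q x₀ x = 0) hcx => by
      simpa [hx₀, hx] using congrArg (polar q x₀) hcx)
    (fun z => ⟨-(polar q x₀ z / polar q x₀ x₀), by
      change polar q x₀ _ = 0
      rw [polar_add_right, polar_smul_right, smul_eq_mul, neg_mul, div_mul_cancel₀ _ hqx₀,
        add_neg_cancel]⟩)⟩
  have hB (r : QuadraticForm ℝ V) (hr : ∀ j, polar r x₀ (b j) = 0)
      (hrb : (polarBilin r).IsOrthoᵢ ((↑) ∘ b)) : (polarBilin r).IsOrthoᵢ B := by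
    rw [hBcoe]
    exact isOrthoᵢ_polarBilin_cons r hr hrb
  let e := finCongr (by simpa using (finrank_eq_card_basis B).symm : n + 1 = finrank ℝ V)
  refine ⟨B.reindex e, ?_, ?_⟩ <;> intro i j hij <;> simp only [Basis.coe_reindex]
  · exact hB p (fun j => hp _ (b j).2) hpb (e.symm.injective.ne hij)
  · exact hB q (fun j => (b j).2) hqb (e.symm.injective.ne hij)

end QuadraticMap

theorem IsIndexOneForm.pos_of_polar_eq_zero {V : Type*} [AddCommGroup V] [Module ℝ V]
    [FiniteDimensional ℝ V] {p : QuadraticForm ℝ V} (hp : IsIndexOneForm p) {u w : V}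
    (hu : p u < 0) (horth : polar p u w = 0) (hw : w ≠ 0) : 0 < p w := by
  obtain ⟨b, i₀, hb, -, hpos⟩ := hp
  have key : ∀ x, b.repr x i₀ = 0 → x ≠ 0 → 0 < p x := fun x =>
    pos_of_basis_repr_eq_zero p b hb hpos
  by_contra! hpw
  -- `a • u - c • w` has vanishing `i₀`-coordinate, while `p ≤ 0` on the span of `u` and `w`.
  set a := b.repr w i₀
  set c := b.repr u i₀
  have hc : c ≠ 0 := fun hc => (key u hc (by rintro rfl; simp at hu)).not_gt hu
  have hx : a • u - c • w = 0 := by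
    by_contra hx
    refine (key _ (by simp [a, c]; ring) hx).not_ge ?_
    have : p (a • u - c • w) = a * a * p u + c * c * p w := by
      rw [sub_eq_add_neg, ← neg_smul, QuadraticMap.map_add p, polar_smul_left, polar_smul_right,
        horth, QuadraticMap.map_smul, QuadraticMap.map_smul]
      simp
    rw [this]
    exact add_nonpos (mul_nonpos_of_nonneg_of_nonpos (mul_self_nonneg a) hu.le)
      (mul_nonpos_of_nonneg_of_nonpos (mul_self_nonneg c) hpw)
  have ha : a * (2 * p u) = 0 := by
    simpa [polar_sub_right, polar_smul_right, polar_self, horth] using congrArg (polar p u) hx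
  have ha : a = 0 := (mul_eq_zero.1 ha).resolve_right (by linarith)
  exact hw (by simpa [ha, hc] using hx)

theorem simultaneous_diagonalization_index_one (V : Type*) [AddCommGroup V] [Module ℝ V]
    [FiniteDimensional ℝ V] (p q : QuadraticForm ℝ V)
    (hq : IsIndexOneForm q)
    (hcone : ∀ v : V, v ≠ 0 → q v ≤ 0 → p v < 0) :
    ∃ b : Module.Basis (Fin (Module.finrank ℝ V)) ℝ V, ∀ i j, i ≠ j →
      QuadraticMap.polar p (b i) (b j) = 0 ∧ QuadraticMap.polar q (b i) (b j) = 0 := by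
  have hp_neg (x : V) (hx : q x < 0) : p x < 0 := hcone x (by rintro rfl; simp at hx) hx.le
  have hq_neg : ∃ v, q v < 0 := let ⟨b, i₀, _, hi₀, _⟩ := hq; ⟨b i₀, hi₀⟩
  obtain ⟨x₀, hqx₀, hmax⟩ := exists_isMaxOn_div p q hq_neg hcone
  have hp_orth (w : V) (hw : polar q x₀ w = 0) : polar p x₀ w = 0 := by
    simpa [hw, hqx₀.ne] using (mul_polar_eq_of_isMaxOn_div p q hp_neg hqx₀ hmax w).symm
  let W := LinearMap.ker (polarBilin q x₀)
  have hqW : (q.comp W.subtype).PosDef := fun w hw =>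
    hq.pos_of_polar_eq_zero hqx₀ w.2 (by simpa using hw)
  obtain ⟨b, hpb, hqb⟩ := hqW.exists_basis_isOrthoᵢ (p.comp W.subtype)
  obtain ⟨B, hpB, hqB⟩ := exists_basis_isOrthoᵢ_of_ker_polarBilin p q hqx₀.ne hp_orth b hpb hqb
  exact ⟨B, fun i j hij => ⟨hpB hij, hqB hij⟩⟩
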